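/- arXiv:2010.06729 — 6 statements merged into one kernel-verified Lean document; each statement's English description precedes it below -/
import Mathlib

section
/- Let n ≥ 3 and let ε, r, Ψ, H, ψ, h be as in the context. Then the following are equivalent: (i) for every x ∈ ℝⁿ and all indices i ≠ j, (n−2)ψ_{,x_i x_j}(x) + ψ(x)h_{,x_i x_j}(x) + ψ_{,x_i}(x)h_{,x_j}(x) + ψ_{,x_j}(x)h_{,x_i}(x) = 0; (ii) for every t in the image of r, (n−2)Ψ''(t) + Ψ(t)H''(t) + 2Ψ'(t)H'(t) = 0. -/
/-- First partial derivative of `f : ℝⁿ → ℝ` in the `i`-th coordinate direction. -/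
noncomputable def pd1 {n : ℕ} (f : (Fin n → ℝ) → ℝ) (i : Fin n) (x : Fin n → ℝ) : ℝ :=
  fderiv ℝ f x (Pi.single i 1)

/-- Second partial derivative of `f : ℝⁿ → ℝ`, first in direction `i`, then in direction `j`. -/
noncomputable def pd2 {n : ℕ} (f : (Fin n → ℝ) → ℝ) (i j : Fin n) (x : Fin n → ℝ) : ℝ :=
  fderiv ℝ (fun y => fderiv ℝ f y (Pi.single i 1)) x (Pi.single j 1)

lemma hasFDerivAt_rr (n : ℕ) (ε : Fin n → ℝ) (x : Fin n → ℝ) :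
    HasFDerivAt (fun x : Fin n → ℝ => ∑ i, ε i * x i ^ 2)
      (∑ i, (2 * ε i * x i) • (ContinuousLinearMap.proj i : (Fin n → ℝ) →L[ℝ] ℝ)) x := by
  apply HasFDerivAt.fun_sum
  intro i _
  have h1 : HasFDerivAt (fun x : Fin n → ℝ => x i)
      (ContinuousLinearMap.proj i : (Fin n → ℝ) →L[ℝ] ℝ) x :=
    ((ContinuousLinearMap.proj i : (Fin n → ℝ) →L[ℝ] ℝ).hasFDerivAt : _)
  have h3 : HasFDerivAt (fun y : Fin n → ℝ => ε i * (y i * y i))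
      (ε i • (x i • (ContinuousLinearMap.proj i : (Fin n → ℝ) →L[ℝ] ℝ)
        + x i • (ContinuousLinearMap.proj i : (Fin n → ℝ) →L[ℝ] ℝ))) x :=
    (h1.mul h1).const_mul (ε i)
  have heq : (fun y : Fin n → ℝ => ε i * y i ^ 2) = fun y => ε i * (y i * y i) := by
    funext y; ring
  rw [heq]
  refine h3.congr_fderiv ?_
  ext v
  simp
  ring

lemma Lr_apply (n : ℕ) (ε : Fin n → ℝ) (x : Fin n → ℝ) (j : Fin n) :
    (∑ k, (2 * ε k * x k) • (ContinuousLinearMap.proj k : (Fin n → ℝ) →L[ℝ] ℝ))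
      (Pi.single j 1) = 2 * ε j * x j := by
  rw [ContinuousLinearMap.sum_apply]
  rw [Finset.sum_eq_single j]
  · simp
  · intro k _ hk
    simp [Pi.single_apply, hk]
  · simp

lemma pd1_comp (n : ℕ) (ε : Fin n → ℝ) (F : ℝ → ℝ) (hF : ContDiff ℝ (⊤ : ℕ∞) F)
    (i : Fin n) (x : Fin n → ℝ) :
    pd1 (fun y => F (∑ k, ε k * y k ^ 2)) i x
      = deriv F (∑ k, ε k * x k ^ 2) * (2 * ε i * x i) := by
  have hd : HasDerivAt F (deriv F (∑ k, ε k * x k ^ 2)) (∑ k, ε k * x k ^ 2) :=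
    (hF.differentiable (by simp) _).hasDerivAt
  have hc : HasFDerivAt (fun y : Fin n → ℝ => F (∑ k, ε k * y k ^ 2))
      ((deriv F (∑ k, ε k * x k ^ 2)) •
        (∑ k, (2 * ε k * x k) • (ContinuousLinearMap.proj k : (Fin n → ℝ) →L[ℝ] ℝ))) x :=
    hd.comp_hasFDerivAt x (hasFDerivAt_rr n ε x)
  simp only [pd1]
  rw [hc.fderiv]
  rw [ContinuousLinearMap.smul_apply, Lr_apply]
  simp [smul_eq_mul]

lemma pd2_comp (n : ℕ) (ε : Fin n → ℝ) (F : ℝ → ℝ) (hF : ContDiff ℝ (⊤ : ℕ∞) F)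
    (i j : Fin n) (hij : i ≠ j) (x : Fin n → ℝ) :
    pd2 (fun y => F (∑ k, ε k * y k ^ 2)) i j x
      = 4 * ε i * ε j * x i * x j * deriv (deriv F) (∑ k, ε k * x k ^ 2) := by
  have hF' : ContDiff ℝ (⊤ : ℕ∞) (deriv F) := (contDiff_infty_iff_deriv.mp (hF.of_le (by simp))).2
  simp only [pd2]
  have hfun : (fun y => fderiv ℝ (fun z => F (∑ k, ε k * z k ^ 2)) y (Pi.single i 1))
      = fun y => deriv F (∑ k, ε k * y k ^ 2) * (2 * ε i * y i) := by
    funext y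
    exact pd1_comp n ε F hF i y
  rw [hfun]
  have h1 : HasFDerivAt (fun y : Fin n → ℝ => deriv F (∑ k, ε k * y k ^ 2))
      ((deriv (deriv F) (∑ k, ε k * x k ^ 2)) •
        (∑ k, (2 * ε k * x k) • (ContinuousLinearMap.proj k : (Fin n → ℝ) →L[ℝ] ℝ))) x :=
    ((hF'.differentiable (by simp) _).hasDerivAt).comp_hasFDerivAt x
      (hasFDerivAt_rr n ε x)
  have h2 : HasFDerivAt (fun y : Fin n → ℝ => 2 * ε i * y i)
      ((2 * ε i) • (ContinuousLinearMap.proj i : (Fin n → ℝ) →L[ℝ] ℝ)) x := by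
    have := ((ContinuousLinearMap.proj i : (Fin n → ℝ) →L[ℝ] ℝ).hasFDerivAt
      (x := x)).const_mul (2 * ε i)
    exact this
  have h3 : HasFDerivAt (fun y => deriv F (∑ k, ε k * y k ^ 2) * (2 * ε i * y i)) _ x :=
    h1.mul h2
  rw [h3.fderiv]
  have hsj : (Pi.single j 1 : Fin n → ℝ) i = 0 := by
    simp [Pi.single_apply, hij.symm]
  simp only [ContinuousLinearMap.add_apply, ContinuousLinearMap.smul_apply,
    ContinuousLinearMap.proj_apply, Lr_apply, smul_eq_mul]
  rw [show (Pi.single j 1 : Fin n → ℝ) i = 0 from hsj]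
  ring

lemma sum_two (n : ℕ) (ε : Fin n → ℝ) (i j : Fin n) (hij : i ≠ j) (a b : ℝ) :
    ∑ k, ε k * (if k = i then a else if k = j then b else 0) ^ 2
      = ε i * a ^ 2 + ε j * b ^ 2 := by
  have key : ∀ k, ε k * (if k = i then a else if k = j then b else 0) ^ 2
      = (if k = i then ε i * a ^ 2 else 0) + (if k = j then ε j * b ^ 2 else 0) := by
    intro k
    rcases eq_or_ne k i with rfl | h1
    · rw [if_pos rfl, if_pos rfl, if_neg hij, add_zero]
    · rw [if_neg h1, if_neg h1, zero_add]
      rcases eq_or_ne k j with rfl | h2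
      · simp
      · simp [h2]
  simp_rw [key]
  rw [Finset.sum_add_distrib, Finset.sum_ite_eq' Finset.univ i, Finset.sum_ite_eq' Finset.univ j]
  simp

theorem stmt_0 (n : ℕ) (hn : 3 ≤ n)
    (ε : Fin n → ℝ) (hε : ∀ i, ε i = 1 ∨ ε i = -1) (hε1 : ∃ i, ε i = 1)
    (Ψ H : ℝ → ℝ) (hΨ : ContDiff ℝ (⊤ : ℕ∞) Ψ) (hH : ContDiff ℝ (⊤ : ℕ∞) H)
    (r : (Fin n → ℝ) → ℝ) (hr : ∀ x, r x = ∑ i, ε i * x i ^ 2)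
    (ψ h : (Fin n → ℝ) → ℝ)
    (hψ : ∀ x, ψ x = Ψ (r x)) (hh : ∀ x, h x = H (r x)) :
    (∀ x : Fin n → ℝ, ∀ i j : Fin n, i ≠ j →
        ((n : ℝ) - 2) * pd2 ψ i j x + ψ x * pd2 h i j x
          + pd1 ψ i x * pd1 h j x + pd1 ψ j x * pd1 h i x = 0)
      ↔ (∀ t ∈ Set.range r,
        ((n : ℝ) - 2) * deriv (deriv Ψ) t + Ψ t * deriv (deriv H) t
          + 2 * deriv Ψ t * deriv H t = 0) := by
  set E : ℝ → ℝ := fun t =>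
    ((n : ℝ) - 2) * deriv (deriv Ψ) t + Ψ t * deriv (deriv H) t
      + 2 * deriv Ψ t * deriv H t with hE
  have hψf : ψ = fun y => Ψ (∑ k, ε k * y k ^ 2) := by
    funext y; rw [hψ, hr]
  have hhf : h = fun y => H (∑ k, ε k * y k ^ 2) := by
    funext y; rw [hh, hr]
  have key : ∀ (x : Fin n → ℝ) (i j : Fin n), i ≠ j →
      ((n : ℝ) - 2) * pd2 ψ i j x + ψ x * pd2 h i j x
        + pd1 ψ i x * pd1 h j x + pd1 ψ j x * pd1 h i x
      = (4 * ε i * ε j * x i * x j) * E (r x) := by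
    intro x i j hij
    rw [hψf, hhf]
    rw [pd2_comp n ε Ψ hΨ i j hij x, pd2_comp n ε H hH i j hij x,
      pd1_comp n ε Ψ hΨ i x, pd1_comp n ε Ψ hΨ j x,
      pd1_comp n ε H hH i x, pd1_comp n ε H hH j x, hr x, hE]
    ring
  constructor
  · intro hpde t ht
    -- main lemma: E vanishes on any value of the form ε i * a² + ε j * b² with a b ≠ 0
    have main : ∀ (i j : Fin n), i ≠ j → ∀ a b : ℝ, a ≠ 0 → b ≠ 0 →
        E (ε i * a ^ 2 + ε j * b ^ 2) = 0 := by
      intro i j hij a b ha hb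
      set y : Fin n → ℝ := fun k => if k = i then a else if k = j then b else 0 with hy
      have hry : r y = ε i * a ^ 2 + ε j * b ^ 2 := by
        rw [hr]; exact sum_two n ε i j hij a b
      have hyi : y i = a := by simp [hy]
      have hyj : y j = b := by simp [hy, hij.symm]
      have h0 := hpde y i j hij
      rw [key y i j hij, hry, hyi, hyj] at h0
      have hεi : ε i ≠ 0 := by rcases hε i with h' | h' <;> rw [h'] <;> norm_num
      have hεj : ε j ≠ 0 := by rcases hε j with h' | h' <;> rw [h'] <;> norm_num
      have hne : (4 : ℝ) * ε i * ε j * a * b ≠ 0 := by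
        simp [hεi, hεj, ha, hb]
      exact (mul_eq_zero.mp h0).resolve_left hne
    obtain ⟨i₀, hi₀⟩ := hε1
    by_cases hneg : ∃ j, ε j = -1
    · obtain ⟨j, hj⟩ := hneg
      have hij : i₀ ≠ j := by
        intro hcon; rw [hcon, hj] at hi₀; norm_num at hi₀
      have ha2 : (0:ℝ) < t + |t| + 1 := by
        have := abs_nonneg t
        have := neg_abs_le t
        linarith
      have hb2 : (0:ℝ) < |t| + 1 := by positivity
      have hmain := main i₀ j hij (Real.sqrt (t + |t| + 1)) (Real.sqrt (|t| + 1))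
        (by positivity) (by positivity)
      rw [Real.sq_sqrt ha2.le, Real.sq_sqrt hb2.le, hi₀, hj] at hmain
      have : 1 * (t + |t| + 1) + -1 * (|t| + 1) = t := by ring
      rwa [this] at hmain
    · -- all signs are +1
      have hall : ∀ k, ε k = 1 := by
        intro k
        rcases hε k with h' | h'
        · exact h'
        · exact absurd ⟨k, h'⟩ hneg
      obtain ⟨x, hx⟩ := ht
      have ht0 : 0 ≤ t := by
        rw [← hx, hr]
        apply Finset.sum_nonneg
        intro k _
        rw [hall k, one_mul]
        positivity
      have hEpos : ∀ s : ℝ, 0 < s → E s = 0 := by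
        intro s hs
        haveI : Nontrivial (Fin n) := ⟨⟨⟨0, by omega⟩, ⟨1, by omega⟩, by
          intro hcon
          have := congrArg Fin.val hcon
          simp at this⟩⟩
        obtain ⟨j, hj⟩ := exists_ne i₀
        have hmain := main i₀ j hj.symm (Real.sqrt (s / 2)) (Real.sqrt (s / 2))
          (by positivity) (by positivity)
        rw [Real.sq_sqrt (by linarith : (0:ℝ) ≤ s / 2), hi₀, hall j] at hmain
        have : 1 * (s / 2) + 1 * (s / 2) = s := by ring
        rwa [this] at hmain
      rcases lt_or_eq_of_le ht0 with hlt | heq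
      · exact hEpos t hlt
      · -- t = 0 : use continuity of E
        subst heq
        have hΨ1 : ContDiff ℝ (⊤ : ℕ∞) (deriv Ψ) :=
          (contDiff_infty_iff_deriv.mp (hΨ.of_le (by simp))).2
        have hΨ2 : ContDiff ℝ (⊤ : ℕ∞) (deriv (deriv Ψ)) :=
          (contDiff_infty_iff_deriv.mp hΨ1).2
        have hH1 : ContDiff ℝ (⊤ : ℕ∞) (deriv H) :=
          (contDiff_infty_iff_deriv.mp (hH.of_le (by simp))).2
        have hH2 : ContDiff ℝ (⊤ : ℕ∞) (deriv (deriv H)) :=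
          (contDiff_infty_iff_deriv.mp hH1).2
        have hcont : Continuous E := by
          rw [hE]
          apply Continuous.add
          apply Continuous.add
          · exact continuous_const.mul hΨ2.continuous
          · exact hΨ.continuous.mul hH2.continuous
          · exact (continuous_const.mul hΨ1.continuous).mul hH1.continuous
        have h1 : Filter.Tendsto E (nhdsWithin 0 (Set.Ioi 0)) (nhds (E 0)) :=
          (hcont.continuousAt).continuousWithinAt.tendsto
        have h2 : Filter.Tendsto E (nhdsWithin 0 (Set.Ioi 0)) (nhds 0) := by
          apply Filter.Tendsto.congr' _ tendsto_const_nhds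
          filter_upwards [self_mem_nhdsWithin] with s hs
          exact (hEpos s hs).symm
        have : E 0 = 0 := tendsto_nhds_unique h1 h2
        exact this
  · intro hode x i j hij
    rw [key x i j hij]
    have h0 : E (r x) = 0 := hode (r x) ⟨x, rfl⟩
    rw [h0, mul_zero]
end

section
/- Let n ≥ 3 be an integer, let I ⊆ ℝ be an open interval, let C be a real constant, and let Ψ, H : I → ℝ be smooth functions satisfying, for all t ∈ I, (E1): (n−2)Ψ''(t) + Ψ(t)H''(t) + 2Ψ'(t)H'(t) = 0 and (E2): Ψ(t)[(n−2)Ψ'(t) + Ψ(t)H'(t)] + t[(2−n)Ψ'(t)² − 2Ψ(t)Ψ'(t)H'(t)] = C. Then at every t ∈ I with H'(t) ≠ 0, one has t Ψ(t) Ψ''(t) = t Ψ'(t)² − Ψ(t)Ψ'(t). -/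
theorem stmt_4 (n : ℕ) (hn : 3 ≤ n)
    (I : Set ℝ) (hIopen : IsOpen I) (hIconv : Convex ℝ I)
    (C : ℝ) (Ψ H : ℝ → ℝ)
    (hΨ : ContDiffOn ℝ (⊤ : ℕ∞) Ψ I) (hH : ContDiffOn ℝ (⊤ : ℕ∞) H I)
    (hE1 : ∀ t ∈ I,
      ((n : ℝ) - 2) * deriv (deriv Ψ) t + Ψ t * deriv (deriv H) t
        + 2 * deriv Ψ t * deriv H t = 0)
    (hE2 : ∀ t ∈ I,
      Ψ t * (((n : ℝ) - 2) * deriv Ψ t + Ψ t * deriv H t)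
        + t * ((2 - (n : ℝ)) * (deriv Ψ t) ^ 2 - 2 * Ψ t * deriv Ψ t * deriv H t) = C) :
    ∀ t ∈ I, deriv H t ≠ 0 →
      t * Ψ t * deriv (deriv Ψ) t = t * (deriv Ψ t) ^ 2 - Ψ t * deriv Ψ t := by
  intro t ht hH't
  set c : ℝ := (n : ℝ) - 2 with hc
  -- differentiability facts
  have hΨd : ContDiffOn ℝ (⊤ : ℕ∞) (deriv Ψ) I := hΨ.deriv_of_isOpen hIopen (by simp)
  have hHd : ContDiffOn ℝ (⊤ : ℕ∞) (deriv H) I := hH.deriv_of_isOpen hIopen (by simp)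
  have htnhds := hIopen.mem_nhds ht
  have dΨ : HasDerivAt Ψ (deriv Ψ t) t :=
    (((hΨ.contDiffAt htnhds).differentiableAt (by simp))).hasDerivAt
  have dΨ' : HasDerivAt (deriv Ψ) (deriv (deriv Ψ) t) t :=
    (((hΨd.contDiffAt htnhds).differentiableAt (by simp))).hasDerivAt
  have dH : HasDerivAt H (deriv H t) t :=
    (((hH.contDiffAt htnhds).differentiableAt (by simp))).hasDerivAt
  have dH' : HasDerivAt (deriv H) (deriv (deriv H) t) t :=
    (((hHd.contDiffAt htnhds).differentiableAt (by simp))).hasDerivAt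
  set a := Ψ t
  set b := deriv Ψ t
  set b2 := deriv (deriv Ψ) t
  set h1 := deriv H t
  set h2 := deriv (deriv H) t
  -- derivative of LHS of E2
  have hF1 : HasDerivAt (fun x => c * deriv Ψ x + Ψ x * deriv H x)
      (c * b2 + (b * h1 + a * h2)) t := (dΨ'.const_mul c).add (dΨ.mul dH')
  have hF2 : HasDerivAt (fun x => Ψ x * (c * deriv Ψ x + Ψ x * deriv H x))
      (b * (c * b + a * h1) + a * (c * b2 + (b * h1 + a * h2))) t := dΨ.mul hF1
  have hF3 : HasDerivAt (fun x => (2 - (n:ℝ)) * (deriv Ψ x) ^ 2 - 2 * Ψ x * deriv Ψ x * deriv H x)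
      ((2 - (n:ℝ)) * (2 * b ^ 1 * b2)
        - (((2 * b) * b + (2 * a) * b2) * h1 + (2 * a * b) * h2)) t := by
    exact ((dΨ'.pow 2).const_mul (2 - (n:ℝ))).sub
      ((((dΨ.const_mul 2).mul dΨ')).mul dH')
  have hF : HasDerivAt (fun x => Ψ x * (c * deriv Ψ x + Ψ x * deriv H x)
      + x * ((2 - (n:ℝ)) * (deriv Ψ x) ^ 2 - 2 * Ψ x * deriv Ψ x * deriv H x))
      ((b * (c * b + a * h1) + a * (c * b2 + (b * h1 + a * h2)))
        + (1 * ((2 - (n:ℝ)) * b ^ 2 - 2 * a * b * h1)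
          + t * ((2 - (n:ℝ)) * (2 * b ^ 1 * b2)
            - (((2 * b) * b + (2 * a) * b2) * h1 + (2 * a * b) * h2)))) t :=
    hF2.add ((hasDerivAt_id t).mul hF3)
  have hFconst : HasDerivAt (fun x => Ψ x * (c * deriv Ψ x + Ψ x * deriv H x)
      + x * ((2 - (n:ℝ)) * (deriv Ψ x) ^ 2 - 2 * Ψ x * deriv Ψ x * deriv H x)) 0 t := by
    refine (hasDerivAt_const t C).congr_of_eventuallyEq ?_
    filter_upwards [htnhds] with x hx
    exact hE2 x hx
  have hD0 := hF.unique hFconst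
  have hE1t := hE1 t ht
  have key : 2 * h1 * (t * a * b2) = 2 * h1 * (t * b ^ 2 - a * b) := by
    linear_combination (a - 2 * t * b) * hE1t - hD0
  have h2h1 : (2 : ℝ) * h1 ≠ 0 := by
    exact mul_ne_zero two_ne_zero hH't
  exact mul_left_cancel₀ h2h1 key
end

section
/- Let n ≥ 3 and m ≥ 2 be integers, let λ_F, λ̃ be real constants, let k₂ > 0, and set Ψ(t) = k₂ t^{1/2} on (0,∞). Suppose H : (0,∞) → ℝ is a smooth function such that Ψ and H satisfy the Schouten ODE system (E1)–(E3) for all t ∈ (0,∞). Then λ_F = (n−2)k₂², λ̃ = −(m−n+1)(n−2)k₂²/(2(n−1)), and there exist real constants c, c₁ such that H(t) = ((n−2)/8)(ln t)² + c ln t + c₁ for all t ∈ (0,∞). -/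
/-- The Schouten ODE system (E1)–(E3) at a point `t`, for dimension parameters `n`, `m`
and real constants `lF` (= λ_F) and `lt` (= λ̃). -/
def SchoutenODE (n m : ℕ) (lF lt : ℝ) (Ψ H : ℝ → ℝ) (t : ℝ) : Prop :=
  -- (E1)
  (((n : ℝ) - 2) * deriv (deriv Ψ) t + Ψ t * deriv (deriv H) t
      + 2 * deriv Ψ t * deriv H t = 0) ∧
  -- (E2)
  (Ψ t * (((n : ℝ) - 2) * deriv Ψ t + Ψ t * deriv H t)
      + t * ((2 - (n : ℝ)) * (deriv Ψ t) ^ 2 - 2 * Ψ t * deriv Ψ t * deriv H t)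
      = lF * (m : ℝ) / (4 * ((n : ℝ) - 1)) + lt / 2) ∧
  -- (E3)
  (-((n : ℝ) * Ψ t * deriv Ψ t)
      + 2 * t * (((n : ℝ) / 2) * (deriv Ψ t) ^ 2 - Ψ t * deriv (deriv Ψ) t)
      = lF * ((m : ℝ) - 2 * (n : ℝ) + 2) / (4 * ((n : ℝ) - 1)) + lt / 2)

/-- A function with zero derivative on `Ioi 0` is constant there. -/
lemma constOn_Ioi_aux {f : ℝ → ℝ} (h : ∀ x ∈ Set.Ioi (0:ℝ), HasDerivAt f 0 x)
    {x y : ℝ} (hx : x ∈ Set.Ioi (0:ℝ)) (hy : y ∈ Set.Ioi (0:ℝ)) : f x = f y := by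
  refine (convex_Ioi (0:ℝ)).is_const_of_fderivWithin_eq_zero
    (fun z hz => ((h z hz).differentiableAt).differentiableWithinAt) (fun z hz => ?_) hx hy
  rw [fderivWithin_of_isOpen isOpen_Ioi hz]
  have := (h z hz).hasFDerivAt.fderiv
  simpa [ContinuousLinearMap.ext_iff] using this

lemma derivPsi_aux (k₂ : ℝ) (Ψ : ℝ → ℝ)
    (hΨdef : ∀ t ∈ Set.Ioi (0 : ℝ), Ψ t = k₂ * t ^ (1 / 2 : ℝ))
    (t : ℝ) (ht : t ∈ Set.Ioi (0:ℝ)) :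
    deriv Ψ t = k₂ * ((1/2) * t ^ (-(1/2) : ℝ)) := by
  have hEq : Ψ =ᶠ[nhds t] fun x => k₂ * x ^ (1/2 : ℝ) :=
    Filter.eventually_of_mem (isOpen_Ioi.mem_nhds ht) hΨdef
  rw [hEq.deriv_eq]
  have hD : HasDerivAt (fun x : ℝ => k₂ * x ^ (1/2 : ℝ))
      (k₂ * ((1/2) * t ^ ((1/2 : ℝ) - 1))) t :=
    (Real.hasDerivAt_rpow_const (Or.inl (ne_of_gt (Set.mem_Ioi.mp ht)))).const_mul k₂
  rw [hD.deriv]; norm_num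

lemma dderivPsi_aux (k₂ : ℝ) (Ψ : ℝ → ℝ)
    (hΨdef : ∀ t ∈ Set.Ioi (0 : ℝ), Ψ t = k₂ * t ^ (1 / 2 : ℝ))
    (t : ℝ) (ht : t ∈ Set.Ioi (0:ℝ)) :
    deriv (deriv Ψ) t = k₂ * ((1/2) * (-(1/2) * t ^ (-(3/2) : ℝ))) := by
  have hEq : deriv Ψ =ᶠ[nhds t] fun x => k₂ * (1/2 : ℝ) * x ^ (-(1/2) : ℝ) :=
    Filter.eventually_of_mem (isOpen_Ioi.mem_nhds ht) (fun x hx => by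
      rw [derivPsi_aux k₂ Ψ hΨdef x hx]; ring)
  rw [hEq.deriv_eq]
  have hD : HasDerivAt (fun x : ℝ => k₂ * (1/2 : ℝ) * x ^ (-(1/2) : ℝ))
      ((k₂ * (1/2 : ℝ)) * (-(1/2) * t ^ ((-(1/2) : ℝ) - 1))) t :=
    (Real.hasDerivAt_rpow_const (Or.inl (ne_of_gt (Set.mem_Ioi.mp ht)))).const_mul _
  rw [hD.deriv]
  norm_num
  ring

theorem stmt_8 (n m : ℕ) (hn : 3 ≤ n) (hm : 2 ≤ m) (lF lt : ℝ)
    (k₂ : ℝ) (hk₂ : 0 < k₂)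
    (Ψ H : ℝ → ℝ) (hΨdef : ∀ t ∈ Set.Ioi (0 : ℝ), Ψ t = k₂ * t ^ (1 / 2 : ℝ))
    (hH : ContDiffOn ℝ (⊤ : ℕ∞) H (Set.Ioi 0))
    (hsys : ∀ t ∈ Set.Ioi (0 : ℝ), SchoutenODE n m lF lt Ψ H t) :
    lF = ((n : ℝ) - 2) * k₂ ^ 2 ∧
    lt = -(((m : ℝ) - (n : ℝ) + 1) * ((n : ℝ) - 2) * k₂ ^ 2) / (2 * ((n : ℝ) - 1)) ∧
    ∃ c c₁ : ℝ, ∀ t ∈ Set.Ioi (0 : ℝ),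
      H t = ((n : ℝ) - 2) / 8 * (Real.log t) ^ 2 + c * Real.log t + c₁ := by
  have h1 : (1:ℝ) ∈ Set.Ioi (0:ℝ) := by norm_num
  have hn1 : ((n:ℝ) - 1) ≠ 0 := by
    have : (3:ℝ) ≤ n := by exact_mod_cast hn
    nlinarith
  -- values of Ψ and its derivatives at 1
  have hP : Ψ 1 = k₂ := by rw [hΨdef 1 h1, Real.one_rpow]; ring
  have hdP : deriv Ψ 1 = k₂ / 2 := by
    rw [derivPsi_aux k₂ Ψ hΨdef 1 h1, Real.one_rpow]; ring
  have hddP : deriv (deriv Ψ) 1 = -(k₂ / 4) := by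
    rw [dderivPsi_aux k₂ Ψ hΨdef 1 h1, Real.one_rpow]; ring
  obtain ⟨e1₁, e2, e3⟩ := hsys 1 h1
  rw [hP, hdP] at e2
  rw [hP, hdP, hddP] at e3
  have E2' : lF * m / (4*((n:ℝ)-1)) + lt/2 = ((n:ℝ)-2)*k₂^2/4 := by
    rw [← e2]; ring
  have E3' : lF * ((m:ℝ)-2*(n:ℝ)+2) / (4*((n:ℝ)-1)) + lt/2 = (2-(n:ℝ))*k₂^2/4 := by
    rw [← e3]; ring
  field_simp at E2' E3'
  have hlF : lF = ((n : ℝ) - 2) * k₂ ^ 2 := by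
    have key : lF * (16*((n:ℝ)-1)) = (((n:ℝ)-2)*k₂^2) * (16*((n:ℝ)-1)) := by
      linear_combination 4*(E2' - E3')
    exact mul_right_cancel₀ (mul_ne_zero (by norm_num) hn1) key
  have hlt : lt = -(((m : ℝ) - (n : ℝ) + 1) * ((n : ℝ) - 2) * k₂ ^ 2) / (2 * ((n : ℝ) - 1)) := by
    have h2 : (2*((n:ℝ)-1)) ≠ 0 := mul_ne_zero (by norm_num) hn1
    rw [eq_div_iff h2]
    linear_combination (1/2)*E2' - (m:ℝ)*hlF
  refine ⟨hlF, hlt, ?_⟩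
  -- the key second-order ODE for H
  have key : ∀ t ∈ Set.Ioi (0:ℝ),
      deriv H t + t * deriv (deriv H) t = ((n:ℝ)-2)/4 * t⁻¹ := by
    intro t htm
    have ht : (0:ℝ) < t := Set.mem_Ioi.mp htm
    obtain ⟨e1, -, -⟩ := hsys t htm
    rw [hΨdef t htm, derivPsi_aux k₂ Ψ hΨdef t htm, dderivPsi_aux k₂ Ψ hΨdef t htm] at e1
    set u := t ^ (1/2 : ℝ) with hu
    have hupos : 0 < u := Real.rpow_pos_of_pos ht _
    have hu2 : u * u = t := by
      rw [hu, ← Real.rpow_add ht]; norm_num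
    have ht0 : t ≠ 0 := ne_of_gt ht
    have hu0 : u ≠ 0 := ne_of_gt hupos
    have hk : k₂ ≠ 0 := ne_of_gt hk₂
    have hm : t ^ (-(1/2) : ℝ) = u⁻¹ := by rw [Real.rpow_neg ht.le]
    have hm3 : t ^ (-(3/2) : ℝ) = (u * t)⁻¹ := by
      rw [Real.rpow_neg ht.le, show ((3/2):ℝ) = 1/2 + 1 by norm_num,
        Real.rpow_add ht, Real.rpow_one]
    rw [hm, hm3] at e1
    have e1' : ((n:ℝ)-2) * ((1/2) * (-(1/2) * (u*t)⁻¹)) + u * deriv (deriv H) t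
        + 2 * ((1/2) * u⁻¹) * deriv H t = 0 := by
      apply mul_left_cancel₀ hk
      rw [mul_zero]
      linear_combination e1
    have p1 : u * u⁻¹ = 1 := mul_inv_cancel₀ hu0
    have p2 : u * (u * t)⁻¹ = t⁻¹ := by
      rw [mul_inv, ← mul_assoc, p1, one_mul]
    linear_combination u * e1' - deriv H t * p1 - deriv (deriv H) t * hu2
      + (((n:ℝ)-2)/4) * p2
  -- differentiability facts
  have hHd : ∀ t ∈ Set.Ioi (0:ℝ), HasDerivAt H (deriv H t) t := by
    intro t ht
    exact (((hH.differentiableOn (by simp)) t ht).differentiableAt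
      (isOpen_Ioi.mem_nhds ht)).hasDerivAt
  have hH'd : ∀ t ∈ Set.Ioi (0:ℝ), HasDerivAt (deriv H) (deriv (deriv H) t) t := by
    intro t ht
    have h' : ContDiffOn ℝ (⊤ : ℕ∞) (deriv H) (Set.Ioi 0) :=
      hH.deriv_of_isOpen isOpen_Ioi (by simp)
    exact (((h'.differentiableOn (by simp)) t ht).differentiableAt
      (isOpen_Ioi.mem_nhds ht)).hasDerivAt
  set c := deriv H 1 with hc
  have step1 : ∀ t ∈ Set.Ioi (0:ℝ),
      t * deriv H t = ((n:ℝ)-2)/4 * Real.log t + c := by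
    have hconst : ∀ x ∈ Set.Ioi (0:ℝ), HasDerivAt
        (fun t => t * deriv H t - ((n:ℝ)-2)/4 * Real.log t) 0 x := by
      intro x hx
      have hx0 : x ≠ 0 := ne_of_gt (Set.mem_Ioi.mp hx)
      have hd : HasDerivAt (fun t => t * deriv H t - ((n:ℝ)-2)/4 * Real.log t)
          ((1 * deriv H x + x * deriv (deriv H) x) - ((n:ℝ)-2)/4 * x⁻¹) x :=
        ((hasDerivAt_id x).mul (hH'd x hx)).sub ((Real.hasDerivAt_log hx0).const_mul _)
      have := key x hx
      convert hd using 1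
      linarith
    intro t ht
    have := constOn_Ioi_aux hconst ht h1
    simp only [Real.log_one] at this
    rw [eq_comm]
    linarith [this]
  refine ⟨c, H 1, fun t ht => ?_⟩
  have hconst2 : ∀ x ∈ Set.Ioi (0:ℝ), HasDerivAt
      (fun t => H t - (((n:ℝ)-2)/8 * (Real.log t)^2 + c * Real.log t)) 0 x := by
    intro x hx
    have hx0 : x ≠ 0 := ne_of_gt (Set.mem_Ioi.mp hx)
    have hd : HasDerivAt (fun t => H t - (((n:ℝ)-2)/8 * (Real.log t)^2 + c * Real.log t))
        (deriv H x - (((n:ℝ)-2)/8 * (2 * Real.log x ^ 1 * x⁻¹) + c * x⁻¹)) x :=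
      (hHd x hx).sub ((((Real.hasDerivAt_log hx0).pow 2).const_mul _).add
        ((Real.hasDerivAt_log hx0).const_mul c))
    have hs := step1 x hx
    convert hd using 1
    have hdh : deriv H x = (((n:ℝ)-2)/4 * Real.log x + c) / x := by
      field_simp
      linarith [hs]
    rw [hdh]
    field_simp
    ring
  have hcc := constOn_Ioi_aux hconst2 ht h1
  simp only [Real.log_one] at hcc
  have h2 : H t - (((n:ℝ)-2)/8 * (Real.log t)^2 + c * Real.log t) = H 1 := by
    rw [hcc]; ring
  linarith [h2]
end

section
/- Let n ≥ 3 and m ≥ 2 be integers, let λ_F be a real constant, let k₂ > 0 and k₁ ∈ ℝ, and set λ̃ = −λ_F(m−2n+2)/(2(n−1)). Define Ψ(t) = k₂ t and H(t) = (λ_F/(2k₂²)) t^{−1} + k₁ on (0,∞). Then Ψ and H satisfy the Schouten ODE system (E1)–(E3) for all t ∈ (0,∞). -/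
theorem stmt_9 (n m : ℕ) (hn : 3 ≤ n) (hm : 2 ≤ m) (lF : ℝ)
    (k₂ : ℝ) (hk₂ : 0 < k₂) (k₁ : ℝ)
    (lt : ℝ) (hlt : lt = -(lF * ((m : ℝ) - 2 * (n : ℝ) + 2)) / (2 * ((n : ℝ) - 1)))
    (Ψ H : ℝ → ℝ)
    (hΨdef : ∀ t ∈ Set.Ioi (0 : ℝ), Ψ t = k₂ * t)
    (hHdef : ∀ t ∈ Set.Ioi (0 : ℝ), H t = lF / (2 * k₂ ^ 2) * t⁻¹ + k₁) :
    ∀ t ∈ Set.Ioi (0 : ℝ), SchoutenODE n m lF lt Ψ H t := by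

  intro t ht
  have ht0 : (0:ℝ) < t := ht
  have htne : t ≠ 0 := ne_of_gt ht0
  set c := lF / (2 * k₂ ^ 2) with hc
  have hΨ' : ∀ s ∈ Set.Ioi (0:ℝ), deriv Ψ s = k₂ := by
    intro s hs
    have he : Ψ =ᶠ[nhds s] fun x => k₂ * x :=
      Filter.eventuallyEq_of_mem (isOpen_Ioi.mem_nhds hs) hΨdef
    rw [he.deriv_eq]
    simpa using ((hasDerivAt_id s).const_mul k₂).deriv
  have hH' : ∀ s ∈ Set.Ioi (0:ℝ), deriv H s = c * -(s ^ 2)⁻¹ := by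
    intro s hs
    have he : H =ᶠ[nhds s] fun x => c * x⁻¹ + k₁ :=
      Filter.eventuallyEq_of_mem (isOpen_Ioi.mem_nhds hs) hHdef
    rw [he.deriv_eq]
    exact (((hasDerivAt_inv (ne_of_gt hs)).const_mul c).add_const k₁).deriv
  have hΨ'' : deriv (deriv Ψ) t = 0 := by
    have he : deriv Ψ =ᶠ[nhds t] fun _ => k₂ :=
      Filter.eventuallyEq_of_mem (isOpen_Ioi.mem_nhds ht) hΨ'
    rw [he.deriv_eq]; simp
  have hH'' : deriv (deriv H) t = c * -(-(2 * t ^ 1) / (t ^ 2) ^ 2) := by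
    have he : deriv H =ᶠ[nhds t] fun x => c * -(x ^ 2)⁻¹ :=
      Filter.eventuallyEq_of_mem (isOpen_Ioi.mem_nhds ht) hH'
    rw [he.deriv_eq]
    have h2 : HasDerivAt (fun x : ℝ => (x ^ 2)⁻¹) (-(↑2 * t ^ 1) / (t ^ 2) ^ 2) t :=
      (hasDerivAt_pow 2 t).inv (pow_ne_zero 2 htne)
    have := (h2.neg.const_mul c).deriv
    simpa using this
  have hn1 : (n:ℝ) - 1 ≠ 0 := by
    have : (3:ℝ) ≤ (n:ℝ) := by exact_mod_cast hn
    linarith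
  have hk2 : k₂ ≠ 0 := ne_of_gt hk₂
  refine ⟨?_, ?_, ?_⟩
  · rw [hΨ'' , hH'', hΨ' t ht, hH' t ht, hΨdef t ht, hc]
    field_simp
    ring
  · rw [hΨ' t ht, hH' t ht, hΨdef t ht, hc, hlt]
    field_simp
    ring
  · rw [hΨ'' , hΨ' t ht, hΨdef t ht, hlt]
    field_simp
    ring
end

section
/- Let n ≥ 3 and m ≥ 2 be integers, let k₂ > 0 and c, c₁ ∈ ℝ, and set λ_F = (n−2)k₂² and λ̃ = −(m−n+1)(n−2)k₂²/(2(n−1)). Define Ψ(t) = k₂ t^{1/2} and H(t) = ((n−2)/8)(ln t)² + c ln t + c₁ on (0,∞). Then Ψ and H satisfy the Schouten ODE system (E1)–(E3) for all t ∈ (0,∞). -/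
open Real Set

lemma Set.EqOn.eqOn_deriv_of_hasDerivAt {𝕜 F : Type*} [NontriviallyNormedField 𝕜]
    [NormedAddCommGroup F] [NormedSpace 𝕜 F] {f g g' : 𝕜 → F} {s : Set 𝕜}
    (hfg : EqOn f g s) (hs : IsOpen s) (hg : ∀ x ∈ s, HasDerivAt g (g' x) x) :
    EqOn (_root_.deriv f) g' s :=
  fun x hx => (hfg.deriv hs hx).trans (hg x hx).deriv

section PowerLaw

variable {f : ℝ → ℝ} {k a : ℝ}

lemma eqOn_deriv_of_eqOn_const_mul_rpow (hf : EqOn f (fun t => k * t ^ a) (Ioi 0)) :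
    EqOn (deriv f) (fun t => k * a * t ^ (a - 1)) (Ioi 0) :=
  hf.eqOn_deriv_of_hasDerivAt isOpen_Ioi fun x (hx : 0 < x) => by
    simpa only [mul_assoc] using (hasDerivAt_rpow_const (p := a) (Or.inl hx.ne')).const_mul k

lemma deriv_eq_of_eqOn_const_mul_rpow (hf : EqOn f (fun t => k * t ^ a) (Ioi 0)) {t : ℝ}
    (ht : 0 < t) : deriv f t = a * f t / t := by
  rw [eqOn_deriv_of_eqOn_const_mul_rpow hf ht, hf ht]
  simp only [rpow_sub_one ht.ne']
  ring

lemma deriv_deriv_eq_of_eqOn_const_mul_rpow (hf : EqOn f (fun t => k * t ^ a) (Ioi 0))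
    {t : ℝ} (ht : 0 < t) : deriv (deriv f) t = a * (a - 1) * f t / t ^ 2 := by
  rw [deriv_eq_of_eqOn_const_mul_rpow (eqOn_deriv_of_eqOn_const_mul_rpow hf) ht,
    eqOn_deriv_of_eqOn_const_mul_rpow hf ht, hf ht]
  simp only [rpow_sub_one ht.ne']
  field_simp

end PowerLaw

section QuadraticLog

variable {f : ℝ → ℝ} {A B C : ℝ}

lemma eqOn_deriv_of_eqOn_quadratic_log
    (hf : EqOn f (fun t => A * log t ^ 2 + B * log t + C) (Ioi 0)) :
    EqOn (deriv f) (fun t => (2 * A * log t + B) / t) (Ioi 0) :=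
  hf.eqOn_deriv_of_hasDerivAt isOpen_Ioi fun x (hx : 0 < x) => by
    have hlog := hasDerivAt_log hx.ne'
    refine ((((hlog.pow 2).const_mul A).add (hlog.const_mul B)).add_const C).congr_deriv ?_
    field_simp
    ring

lemma eqOn_deriv_deriv_of_eqOn_quadratic_log
    (hf : EqOn f (fun t => A * log t ^ 2 + B * log t + C) (Ioi 0)) :
    EqOn (deriv (deriv f)) (fun t => (2 * A - 2 * A * log t - B) / t ^ 2) (Ioi 0) :=
  (eqOn_deriv_of_eqOn_quadratic_log hf).eqOn_deriv_of_hasDerivAt isOpen_Ioi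
    fun x (hx : 0 < x) => by
      refine ((((hasDerivAt_log hx.ne').const_mul (2 * A)).add_const B).div (hasDerivAt_id x)
        hx.ne').congr_deriv ?_
      simp only [id]
      field_simp
      ring

end QuadraticLog

theorem stmt_10_general (n m : ℕ) (hn : 3 ≤ n)
    (k₂ : ℝ) (c c₁ : ℝ)
    (lF : ℝ) (hlF : lF = ((n : ℝ) - 2) * k₂ ^ 2)
    (lt : ℝ) (hlt : lt = -(((m : ℝ) - (n : ℝ) + 1) * ((n : ℝ) - 2) * k₂ ^ 2) / (2 * ((n : ℝ) - 1)))
    (Ψ H : ℝ → ℝ)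
    (hΨdef : ∀ t ∈ Set.Ioi (0 : ℝ), Ψ t = k₂ * t ^ (1 / 2 : ℝ))
    (hHdef : ∀ t ∈ Set.Ioi (0 : ℝ),
      H t = ((n : ℝ) - 2) / 8 * (Real.log t) ^ 2 + c * Real.log t + c₁) :
    ∀ t ∈ Set.Ioi (0 : ℝ), SchoutenODE n m lF lt Ψ H t := by
  intro t (ht : 0 < t)
  have hn1 : (n : ℝ) - 1 ≠ 0 := by
    have : (3 : ℝ) ≤ n := by exact_mod_cast hn
    linarith
  have hΨ' := deriv_eq_of_eqOn_const_mul_rpow hΨdef ht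
  have hΨ'' := deriv_deriv_eq_of_eqOn_const_mul_rpow hΨdef ht
  have hΨsq : Ψ t ^ 2 = k₂ ^ 2 * t := by
    rw [hΨdef t ht, mul_pow, ← sqrt_eq_rpow, sq_sqrt ht.le]
  have hH' : deriv H t = (2 * ((n - 2) / 8) * log t + c) / t :=
    eqOn_deriv_of_eqOn_quadratic_log hHdef ht
  have hH'' : deriv (deriv H) t = (2 * ((n - 2) / 8) - 2 * ((n - 2) / 8) * log t - c) / t ^ 2 :=
    eqOn_deriv_deriv_of_eqOn_quadratic_log hHdef ht
  refine ⟨?_, ?_, ?_⟩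
  · rw [hΨ', hΨ'', hH', hH'']
    field_simp
    ring
  · calc _ = ((n : ℝ) - 2) * Ψ t ^ 2 / (4 * t) := by
          rw [hΨ', hH']
          field_simp
          ring
      _ = _ := by
          rw [hΨsq, hlF, hlt]
          field_simp
          ring
  · calc _ = -((n : ℝ) - 2) * Ψ t ^ 2 / (4 * t) := by
          rw [hΨ', hΨ'']
          field_simp
          ring
      _ = _ := by
          rw [hΨsq, hlF, hlt]
          field_simp
          ring

theorem stmt_10 (n m : ℕ) (hn : 3 ≤ n) (hm : 2 ≤ m)
    (k₂ : ℝ) (hk₂ : 0 < k₂) (c c₁ : ℝ)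
    (lF : ℝ) (hlF : lF = ((n : ℝ) - 2) * k₂ ^ 2)
    (lt : ℝ) (hlt : lt = -(((m : ℝ) - (n : ℝ) + 1) * ((n : ℝ) - 2) * k₂ ^ 2) / (2 * ((n : ℝ) - 1)))
    (Ψ H : ℝ → ℝ)
    (hΨdef : ∀ t ∈ Set.Ioi (0 : ℝ), Ψ t = k₂ * t ^ (1 / 2 : ℝ))
    (hHdef : ∀ t ∈ Set.Ioi (0 : ℝ),
      H t = ((n : ℝ) - 2) / 8 * (Real.log t) ^ 2 + c * Real.log t + c₁) :
    ∀ t ∈ Set.Ioi (0 : ℝ), SchoutenODE n m lF lt Ψ H t :=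
  stmt_10_general n m hn k₂ c c₁ lF hlF lt hlt Ψ H hΨdef hHdef
end

section
/- Let n ≥ 3 be an integer, let I ⊆ ℝ be an open interval, let C be a real constant, and let Ψ, H : I → ℝ be smooth functions satisfying, for all t ∈ I, (E1): (n−2)Ψ''(t) + Ψ(t)H''(t) + 2Ψ'(t)H'(t) = 0 and (E2): Ψ(t)[(n−2)Ψ'(t) + Ψ(t)H'(t)] + t[(2−n)Ψ'(t)² − 2Ψ(t)Ψ'(t)H'(t)] = C. Then for every t ∈ I, 2Ψ(t)Ψ'(t)H'(t) − 2tΨ'(t)²H'(t) + 2tΨ(t)Ψ''(t)H'(t) = 0. -/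
theorem stmt_12 (n : ℕ) (hn : 3 ≤ n)
    (I : Set ℝ) (hIopen : IsOpen I) (hIconv : Convex ℝ I)
    (C : ℝ) (Ψ H : ℝ → ℝ)
    (hΨ : ContDiffOn ℝ (⊤ : ℕ∞) Ψ I) (hH : ContDiffOn ℝ (⊤ : ℕ∞) H I)
    (hE1 : ∀ t ∈ I,
      ((n : ℝ) - 2) * deriv (deriv Ψ) t + Ψ t * deriv (deriv H) t
        + 2 * deriv Ψ t * deriv H t = 0)
    (hE2 : ∀ t ∈ I,
      Ψ t * (((n : ℝ) - 2) * deriv Ψ t + Ψ t * deriv H t)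
        + t * ((2 - (n : ℝ)) * (deriv Ψ t) ^ 2 - 2 * Ψ t * deriv Ψ t * deriv H t) = C) :
    ∀ t ∈ I,
      2 * Ψ t * deriv Ψ t * deriv H t - 2 * t * (deriv Ψ t) ^ 2 * deriv H t
        + 2 * t * Ψ t * deriv (deriv Ψ) t * deriv H t = 0 := by
  intro t ht
  have hmem : I ∈ nhds t := hIopen.mem_nhds ht
  have hΨ1 : ContDiffOn ℝ (⊤ : ℕ∞) (deriv Ψ) I := hΨ.deriv_of_isOpen hIopen (by simp)
  have hH1 : ContDiffOn ℝ (⊤ : ℕ∞) (deriv H) I := hH.deriv_of_isOpen hIopen (by simp)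
  have dΨ : HasDerivAt Ψ (deriv Ψ t) t :=
    (((hΨ.differentiableOn (by simp)).differentiableAt hmem)).hasDerivAt
  have dΨ' : HasDerivAt (deriv Ψ) (deriv (deriv Ψ) t) t :=
    (((hΨ1.differentiableOn (by simp)).differentiableAt hmem)).hasDerivAt
  have dH' : HasDerivAt (deriv H) (deriv (deriv H) t) t :=
    (((hH1.differentiableOn (by simp)).differentiableAt hmem)).hasDerivAt
  set a := Ψ t
  set a' := deriv Ψ t
  set a'' := deriv (deriv Ψ) t
  set b' := deriv H t
  set b'' := deriv (deriv H) t
  set F : ℝ → ℝ := fun x =>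
      Ψ x * (((n : ℝ) - 2) * deriv Ψ x + Ψ x * deriv H x)
        + x * ((2 - (n : ℝ)) * (deriv Ψ x) ^ 2 - 2 * Ψ x * deriv Ψ x * deriv H x) with hFdef
  have hF : HasDerivAt F
      (a' * (((n : ℝ) - 2) * a' + a * b')
        + a * (((n : ℝ) - 2) * a'' + (a' * b' + a * b''))
        + (((2 - (n : ℝ)) * a' ^ 2 - 2 * a * a' * b')
          + t * ((2 - (n : ℝ)) * (2 * a' * a'')
            - 2 * ((a' * a' + a * a'') * b' + a * a' * b'')))) t := by
    have h1 : HasDerivAt (fun x => Ψ x * (((n : ℝ) - 2) * deriv Ψ x + Ψ x * deriv H x))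
        (a' * (((n : ℝ) - 2) * a' + a * b')
          + a * (((n : ℝ) - 2) * a'' + (a' * b' + a * b''))) t :=
      dΨ.mul ((dΨ'.const_mul _).add (dΨ.mul dH'))
    have h2 : HasDerivAt (fun x => x * ((2 - (n : ℝ)) * (deriv Ψ x) ^ 2
          - 2 * Ψ x * deriv Ψ x * deriv H x))
        (1 * ((2 - (n : ℝ)) * a' ^ 2 - 2 * a * a' * b')
          + t * ((2 - (n : ℝ)) * (2 * a' * a'')
            - 2 * ((a' * a' + a * a'') * b' + a * a' * b''))) t := by
      have hsq : HasDerivAt (fun x => (deriv Ψ x) ^ 2) (2 * a' * a'') t := by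
        simp only [pow_two]
        refine (dΨ'.mul dΨ').congr_deriv ?_
        ring
      have hprod : HasDerivAt (fun x => 2 * Ψ x * deriv Ψ x * deriv H x)
          (2 * ((a' * a' + a * a'') * b' + a * a' * b'')) t := by
        refine (((dΨ.const_mul (2:ℝ)).mul dΨ').mul dH').congr_deriv ?_
        simp only [Pi.mul_apply]
        ring
      exact (hasDerivAt_id t).mul ((hsq.const_mul _).sub hprod)
    refine (h1.add h2).congr_deriv ?_
    ring
  have hFev : F =ᶠ[nhds t] fun _ => C := by
    filter_upwards [hmem] with x hx
    exact hE2 x hx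
  have hderiv0 : deriv F t = 0 := by
    rw [Filter.EventuallyEq.deriv_eq hFev]
    simp
  have hD := hF.deriv
  rw [hderiv0] at hD
  have hE1t := hE1 t ht
  linear_combination hD + (a - 2 * t * a') * hE1t
end
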